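/- For each a > 0, letting α(δ) = (aδ)^{1/3} and z(δ) = (1 − δ) e^{i(π − α(δ))}, one has lim_{δ→0⁺} G(z(δ)) = πi + log(1 + (a + 2i)/(a − 2i)), where G(z) = 3 Log(1+z) − Log(1 + z(3+z)/(3+z̄)). -/

import Mathlib

open Real Complex Filter

noncomputable def G (z : ℂ) : ℂ :=
  3 * Complex.log (1 + z)
    - Complex.log (1 + z * (3 + z) / (3 + (starRingEnd ℂ) z))

noncomputable def alp (a δ : ℝ) : ℝ := (a * δ) ^ ((1:ℝ)/3)

noncomputable def zfun (a δ : ℝ) : ℂ :=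
  ((1 - δ : ℝ) : ℂ) * Complex.exp ((↑(π - (a * δ) ^ ((1 : ℝ) / 3)) : ℂ) * Complex.I)

lemma zfun_eq (a δ : ℝ) :
    zfun a δ = -(((1 - δ : ℝ)):ℂ) * Complex.exp (-Complex.I * (alp a δ : ℂ)) := by
  unfold zfun alp
  rw [show ((↑(π - (a*δ)^((1:ℝ)/3)):ℂ) * Complex.I)
      = (π:ℂ)*Complex.I + (-Complex.I * ((a*δ)^((1:ℝ)/3):ℝ)) by push_cast; ring,
    Complex.exp_add, Complex.exp_pi_mul_I]
  ring

lemma conj_zfun (a δ : ℝ) :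
    (starRingEnd ℂ) (zfun a δ)
      = -(((1 - δ : ℝ)):ℂ) * Complex.exp (Complex.I * (alp a δ : ℂ)) := by
  rw [zfun_eq, map_mul, map_neg, Complex.conj_ofReal, ← Complex.exp_conj]
  congr 2
  simp [map_mul, Complex.conj_ofReal]

lemma alp_cube (a δ : ℝ) (ha : 0 < a) (hδ : 0 < δ) : (alp a δ)^3 = a * δ := by
  unfold alp
  rw [← Real.rpow_natCast ((a*δ)^((1:ℝ)/3)) 3, ← Real.rpow_mul (le_of_lt (mul_pos ha hδ))]
  norm_num

lemma expTaylor3 (c : ℂ) :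
    Tendsto (fun t : ℝ => (Complex.exp (c*t) - 1 - c*t - c^2*t^2/2 - c^3*t^3/6)/t^3)
      (nhdsWithin 0 (Set.Ioi 0)) (nhds 0) := by
  have hb : Tendsto (fun t : ℝ => (‖c‖^4 + 1) * t) (nhdsWithin 0 (Set.Ioi 0)) (nhds 0) := by
    have h : Tendsto (fun t : ℝ => (‖c‖^4 + 1) * t) (nhds 0) (nhds ((‖c‖^4 + 1) * (0:ℝ))) :=
      (continuous_const.mul continuous_id).tendsto 0
    rw [mul_zero] at h
    exact h.mono_left nhdsWithin_le_nhds
  refine squeeze_zero_norm' ?_ hb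
  have hmem : Set.Ioo (0:ℝ) (min 1 (1/(‖c‖ + 1))) ∈ nhdsWithin (0:ℝ) (Set.Ioi 0) := by
    apply Ioo_mem_nhdsGT_of_mem
    constructor
    · rfl
    · positivity
  filter_upwards [hmem] with t ht
  obtain ⟨ht0, ht1⟩ := ht
  have hct : ‖c * (t:ℂ)‖ ≤ 1 := by
    rw [norm_mul, Complex.norm_of_nonneg ht0.le]
    have h2 : t ≤ 1/(‖c‖ + 1) := le_of_lt (lt_of_lt_of_le ht1 (min_le_right _ _))
    calc ‖c‖ * t ≤ (‖c‖ + 1) * (1/(‖c‖ + 1)) := by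
          apply mul_le_mul (by linarith) h2 ht0.le (by positivity)
      _ = 1 := by field_simp
  have hkey := Complex.exp_bound hct (n := 4) (by norm_num)
  have hsum : (∑ m ∈ Finset.range 4, (c*t)^m / m.factorial)
      = 1 + c*t + c^2*t^2/2 + c^3*t^3/6 := by
    simp [Finset.sum_range_succ, Nat.factorial]
    ring
  rw [hsum] at hkey
  have habs : ‖(Complex.exp (c*t) - 1 - c*t - c^2*t^2/2 - c^3*t^3/6)/t^3‖
      = ‖Complex.exp (c*t) - (1 + c*t + c^2*t^2/2 + c^3*t^3/6)‖ / t^3 := by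
    rw [norm_div]
    congr 1
    · ring_nf
    · rw [← Complex.ofReal_pow, Complex.norm_of_nonneg (by positivity)]
  rw [habs]
  rw [div_le_iff₀ (by positivity)]
  calc ‖Complex.exp (c*t) - (1 + c*t + c^2*t^2/2 + c^3*t^3/6)‖
      ≤ ‖c*(t:ℂ)‖ ^ 4 * ((5:ℝ) * ((24:ℝ) * 4)⁻¹) := by
        convert hkey using 2 <;> norm_num [Nat.factorial]
    _ ≤ ‖c*(t:ℂ)‖ ^ 4 := by
        nlinarith [pow_nonneg (norm_nonneg (c*(t:ℂ))) 4]
    _ = ‖c‖^4 * t^4 := by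
        rw [norm_mul, Complex.norm_of_nonneg ht0.le, mul_pow]
    _ ≤ ((‖c‖^4 + 1) * t) * t^3 := by nlinarith [pow_pos ht0 3, pow_pos ht0 4]

lemma expTaylor1 (c : ℂ) :
    Tendsto (fun t : ℝ => (Complex.exp (c*t) - 1)/t)
      (nhdsWithin 0 (Set.Ioi 0)) (nhds c) := by
  have h3 := expTaylor3 c
  have ht2 : Tendsto (fun t : ℝ => ((t:ℂ))^2) (nhdsWithin (0:ℝ) (Set.Ioi 0)) (nhds 0) := by
    have : Continuous (fun t : ℝ => ((t:ℂ))^2) := by continuity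
    have h := this.tendsto 0
    simpa using h.mono_left nhdsWithin_le_nhds
  have htc : Tendsto (fun t : ℝ => c + c^2*(t:ℂ)/2 + c^3*(t:ℂ)^2/6)
      (nhdsWithin (0:ℝ) (Set.Ioi 0)) (nhds c) := by
    have : Continuous (fun t : ℝ => c + c^2*(t:ℂ)/2 + c^3*(t:ℂ)^2/6) := by continuity
    have h := this.tendsto 0
    simpa using h.mono_left nhdsWithin_le_nhds
  have hcomb := (h3.mul ht2).add htc
  rw [zero_mul, zero_add] at hcomb
  refine hcomb.congr' ?_
  filter_upwards [self_mem_nhdsWithin] with t ht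
  have ht0 : (t:ℂ) ≠ 0 := by
    exact_mod_cast ne_of_gt (Set.mem_Ioi.mp ht)
  field_simp
  ring

lemma alphaLim' (a : ℝ) (ha : 0 < a) :
    Tendsto (fun δ : ℝ => (a*δ) ^ ((1:ℝ)/3)) (nhdsWithin 0 (Set.Ioi 0))
      (nhdsWithin 0 (Set.Ioi 0)) := by
  rw [tendsto_nhdsWithin_iff]
  constructor
  · have h1 : Tendsto (fun δ : ℝ => a*δ) (nhdsWithin 0 (Set.Ioi 0)) (nhds 0) := by
      have h : Continuous (fun δ : ℝ => a*δ) := by continuity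
      have := h.tendsto (0:ℝ)
      rw [show a * (0:ℝ) = 0 by ring] at this
      exact this.mono_left nhdsWithin_le_nhds
    have h2 : ContinuousAt (fun x : ℝ => x ^ ((1:ℝ)/3)) 0 :=
      Real.continuousAt_rpow_const 0 _ (Or.inr (by norm_num))
    have := h2.tendsto.comp h1
    simpa [Function.comp_def, Real.zero_rpow (by norm_num : (1:ℝ)/3 ≠ 0)] using this
  · filter_upwards [self_mem_nhdsWithin] with δ hδ
    exact Set.mem_Ioi.mpr (Real.rpow_pos_of_pos (mul_pos ha hδ) _)

lemma PLim :
    Tendsto (fun t : ℝ => (3 - 3*Complex.exp (-Complex.I*t) - Complex.exp (Complex.I*t)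
        + Complex.exp (-2*Complex.I*t))/(t:ℂ)^3)
      (nhdsWithin 0 (Set.Ioi 0)) (nhds Complex.I) := by
  have h1 := (expTaylor3 (-Complex.I)).const_mul (-3 : ℂ)
  have h2 := (expTaylor3 Complex.I).const_mul (-1 : ℂ)
  have h3 := expTaylor3 (-2*Complex.I)
  have hsum := ((h1.add h2).add h3).add (tendsto_const_nhds (x := Complex.I))
  rw [mul_zero, mul_zero, add_zero, add_zero, zero_add] at hsum
  refine hsum.congr' ?_
  filter_upwards [self_mem_nhdsWithin] with t ht
  have ht0 : (t:ℂ) ≠ 0 := by exact_mod_cast ne_of_gt (Set.mem_Ioi.mp ht)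
  have e1 : (-Complex.I)^2 = -1 := by simp [pow_two]
  have e2 : (-Complex.I)^3 = Complex.I := by
    rw [pow_succ, e1]; ring
  have e3 : (Complex.I)^2 = -1 := Complex.I_sq
  have e4 : (Complex.I)^3 = -Complex.I := by rw [pow_succ, e3]; ring
  have e5 : (-2*Complex.I)^2 = -4 := by rw [mul_pow, e3]; ring
  have e6 : (-2*Complex.I)^3 = 8*Complex.I := by rw [pow_succ, e5]; ring
  rw [e1, e2, e3, e4, e5, e6]
  have ht3 : ((t:ℂ))^3 ≠ 0 := pow_ne_zero _ ht0
  rw [eq_div_iff ht3]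
  field_simp
  ring

lemma CLim (a : ℝ) (ha : 0 < a) :
    Tendsto (fun δ : ℝ => (1 + zfun a δ) / (alp a δ : ℂ))
      (nhdsWithin 0 (Set.Ioi 0)) (nhds Complex.I) := by
  have h1 : Tendsto (fun δ : ℝ => -((Complex.exp (-Complex.I * (alp a δ:ℂ)) - 1)/(alp a δ:ℂ)))
      (nhdsWithin 0 (Set.Ioi 0)) (nhds Complex.I) := by
    have := ((expTaylor1 (-Complex.I)).comp (alphaLim' a ha)).neg
    rw [neg_neg] at this
    exact this
  have h2 : Tendsto (fun δ : ℝ => (((alp a δ)^2/a : ℝ) : ℂ) * Complex.exp (-Complex.I * (alp a δ:ℂ)))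
      (nhdsWithin 0 (Set.Ioi 0)) (nhds 0) := by
    have hc : Continuous (fun t : ℝ => ((t^2/a : ℝ) : ℂ) * Complex.exp (-Complex.I * (t:ℂ))) := by
      continuity
    have h0 := hc.tendsto 0
    have h0' : Tendsto (fun t : ℝ => ((t^2/a : ℝ) : ℂ) * Complex.exp (-Complex.I * (t:ℂ)))
        (nhdsWithin 0 (Set.Ioi 0)) (nhds 0) := by
      simpa using h0.mono_left nhdsWithin_le_nhds
    exact h0'.comp (alphaLim' a ha)
  have hsum := h1.add h2
  rw [add_zero] at hsum
  refine hsum.congr' ?_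
  filter_upwards [self_mem_nhdsWithin] with δ hδ
  have hδ0 : (0:ℝ) < δ := hδ
  have hα : 0 < alp a δ := Real.rpow_pos_of_pos (mul_pos ha hδ0) _
  have hα0 : ((alp a δ : ℝ):ℂ) ≠ 0 := by exact_mod_cast ne_of_gt hα
  have ha0 : ((a:ℝ):ℂ) ≠ 0 := by exact_mod_cast ne_of_gt ha
  have hcube : ((alp a δ : ℝ):ℂ)^3 = (a:ℂ) * (δ:ℂ) := by
    exact_mod_cast congrArg (fun x : ℝ => (x:ℂ)) (alp_cube a δ ha hδ0)
  rw [zfun_eq]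
  have hδeq : (δ:ℂ) = ((alp a δ:ℝ):ℂ)^3 / (a:ℂ) := by
    rw [hcube]; field_simp
  push_cast
  rw [show ((1:ℂ) - δ) = 1 - ((alp a δ:ℝ):ℂ)^3/(a:ℂ) by rw [← hδeq]]
  field_simp
  ring

set_option maxHeartbeats 2000000 in
lemma BLim (a : ℝ) (ha : 0 < a) :
    Tendsto (fun δ : ℝ =>
        (1 + zfun a δ * (3 + zfun a δ) / (3 + (starRingEnd ℂ) (zfun a δ))) / (δ:ℂ))
      (nhdsWithin 0 (Set.Ioi 0)) (nhds (1 + Complex.I * a / 2)) := by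
  have hαn : Tendsto (fun δ : ℝ => alp a δ) (nhdsWithin 0 (Set.Ioi 0)) (nhds 0) :=
    (alphaLim' a ha).mono_right nhdsWithin_le_nhds
  -- P part
  have hP : Tendsto (fun δ : ℝ => (a:ℂ) * ((3 - 3*Complex.exp (-Complex.I*(alp a δ:ℂ))
      - Complex.exp (Complex.I*(alp a δ:ℂ)) + Complex.exp (-2*Complex.I*(alp a δ:ℂ)))/((alp a δ:ℝ):ℂ)^3))
      (nhdsWithin 0 (Set.Ioi 0)) (nhds ((a:ℂ) * Complex.I)) :=
    (PLim.comp (alphaLim' a ha)).const_mul _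
  -- Q part
  have hQ : Tendsto (fun δ : ℝ => 3*Complex.exp (-Complex.I*(alp a δ:ℂ))
      + Complex.exp (Complex.I*(alp a δ:ℂ)) - 2*Complex.exp (-2*Complex.I*(alp a δ:ℂ)))
      (nhdsWithin 0 (Set.Ioi 0)) (nhds 2) := by
    have hc : Continuous (fun t : ℝ => 3*Complex.exp (-Complex.I*(t:ℂ))
        + Complex.exp (Complex.I*(t:ℂ)) - 2*Complex.exp (-2*Complex.I*(t:ℂ))) := by continuity
    have h0 := hc.tendsto 0
    simp only [Complex.ofReal_zero, mul_zero, Complex.exp_zero] at h0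
    have : (3*(1:ℂ) + 1 - 2*1) = 2 := by norm_num
    rw [this] at h0
    exact h0.comp hαn
  -- δ * e1^2 part
  have hδE : Tendsto (fun δ : ℝ => (δ:ℂ) * (Complex.exp (-Complex.I*(alp a δ:ℂ)))^2)
      (nhdsWithin 0 (Set.Ioi 0)) (nhds 0) := by
    have hd : Tendsto (fun δ : ℝ => (δ:ℂ)) (nhdsWithin 0 (Set.Ioi 0)) (nhds 0) := by
      have : Continuous (fun δ : ℝ => (δ:ℂ)) := Complex.continuous_ofReal
      simpa using (this.tendsto 0).mono_left nhdsWithin_le_nhds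
    have he : Tendsto (fun δ : ℝ => (Complex.exp (-Complex.I*(alp a δ:ℂ)))^2)
        (nhdsWithin 0 (Set.Ioi 0)) (nhds 1) := by
      have hc : Continuous (fun t : ℝ => (Complex.exp (-Complex.I*(t:ℂ)))^2) := by continuity
      have h0 := hc.tendsto 0
      simp only [Complex.ofReal_zero, mul_zero, Complex.exp_zero, one_pow] at h0
      exact h0.comp hαn
    have := hd.mul he
    rwa [zero_mul] at this
  -- denominator
  have hden : Tendsto (fun δ : ℝ => 3 + (starRingEnd ℂ) (zfun a δ))
      (nhdsWithin 0 (Set.Ioi 0)) (nhds 2) := by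
    have hs : Tendsto (fun δ : ℝ => -(((1 - δ:ℝ)):ℂ)) (nhdsWithin 0 (Set.Ioi 0)) (nhds (-1)) := by
      have hc : Continuous (fun δ : ℝ => -(((1 - δ:ℝ)):ℂ)) := by continuity
      have h0 := hc.tendsto 0
      have he : -(((1 - (0:ℝ)):ℝ):ℂ) = -1 := by norm_num
      rw [he] at h0
      exact h0.mono_left nhdsWithin_le_nhds
    have he : Tendsto (fun δ : ℝ => Complex.exp (Complex.I*(alp a δ:ℂ)))
        (nhdsWithin 0 (Set.Ioi 0)) (nhds 1) := by
      have hc : Continuous (fun t : ℝ => Complex.exp (Complex.I*(t:ℂ))) := by continuity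
      have h0 := hc.tendsto 0
      simp only [Complex.ofReal_zero, mul_zero, Complex.exp_zero] at h0
      exact h0.comp hαn
    have := (tendsto_const_nhds (x := (3:ℂ))).add (hs.mul he)
    rw [show (3:ℂ) + (-1)*1 = 2 by norm_num] at this
    refine this.congr ?_
    intro δ
    rw [conj_zfun]
  have hnum := (hP.add hQ).add hδE
  rw [add_zero] at hnum
  have htot := hnum.div hden (by norm_num)
  rw [show ((a:ℂ)*Complex.I + 2)/2 = 1 + Complex.I * a / 2 by ring] at htot
  refine htot.congr' ?_
  filter_upwards [Ioo_mem_nhdsGT_of_mem (Set.mem_Ico.mpr ⟨le_refl (0:ℝ), zero_lt_one⟩)] with δ hδ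
  obtain ⟨hδ0, hδ1⟩ := hδ
  have hα : 0 < alp a δ := Real.rpow_pos_of_pos (mul_pos ha hδ0) _
  have hα0 : ((alp a δ : ℝ):ℂ) ≠ 0 := by exact_mod_cast ne_of_gt hα
  have ha0 : ((a:ℝ):ℂ) ≠ 0 := by exact_mod_cast ne_of_gt ha
  have hd0 : ((δ:ℝ):ℂ) ≠ 0 := by exact_mod_cast ne_of_gt hδ0
  have hcube : ((alp a δ : ℝ):ℂ)^3 = (a:ℂ) * (δ:ℂ) := by
    exact_mod_cast congrArg (fun x : ℝ => (x:ℂ)) (alp_cube a δ ha hδ0)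
  have hE2 : Complex.exp (-2*Complex.I*(alp a δ:ℂ)) = (Complex.exp (-Complex.I*(alp a δ:ℂ)))^2 := by
    rw [show (-2*Complex.I*(alp a δ:ℂ)) = (-Complex.I*(alp a δ:ℂ)) + (-Complex.I*(alp a δ:ℂ)) by ring,
      Complex.exp_add, sq]
  have hcne : (3:ℂ) + (starRingEnd ℂ) (zfun a δ) ≠ 0 := by
    rw [conj_zfun]
    intro h
    have heq : -(((1 - δ:ℝ)):ℂ) * Complex.exp (Complex.I*(alp a δ:ℂ)) = -3 :=
      eq_neg_of_add_eq_zero_right h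
    have habs := congrArg norm heq
    rw [norm_mul, norm_neg, norm_neg,
      Complex.norm_of_nonneg (by linarith : (0:ℝ) ≤ 1 - δ)] at habs
    have hexp : ‖Complex.exp (Complex.I*(alp a δ:ℂ))‖ = 1 := by
      rw [Complex.norm_exp]
      simp
    rw [hexp, mul_one] at habs
    norm_num at habs
    linarith
  have hδeq : (δ:ℂ) = ((alp a δ:ℝ):ℂ)^3 / (a:ℂ) := by rw [hcube]; field_simp
  simp only [Pi.div_apply]
  rw [conj_zfun, zfun_eq, hE2]
  rw [conj_zfun] at hcne
  push_cast at hcne ⊢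
  rw [hcube]
  have key : ∀ (A Pv Qv E X D d : ℂ), d ≠ 0 → D ≠ 0 → A ≠ 0 →
      D + X = Pv + d*Qv + d^2*E →
      (A*(Pv/(A*d)) + Qv + d*E)/D = (1 + X/D)/d := by
    intro A Pv Qv E X D d hd hD hA hsum
    rw [show A*(Pv/(A*d)) = Pv/d by rw [mul_div_assoc']; exact mul_div_mul_left _ _ hA]
    field_simp
    linear_combination (-1:ℂ) * hsum
  exact key _ _ _ _ _ _ _ hd0 hcne ha0 (by ring)

lemma valueEq (a : ℝ) (ha : 0 < a) :
    2*(π:ℂ)*Complex.I + Complex.log (-(a:ℂ)*Complex.I) - Complex.log (1 + Complex.I*(a:ℂ)/2)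
      = (π:ℂ)*Complex.I
        + Complex.log (1 + ((a : ℂ) + 2 * Complex.I) / ((a : ℂ) - 2 * Complex.I)) := by
  have ha0 : (a:ℂ) ≠ 0 := by exact_mod_cast ha.ne'
  have ha2 : (a:ℂ) - 2*Complex.I ≠ 0 := by
    intro h
    have := congrArg Complex.im h
    simp at this
  set u := 1 + ((a : ℂ) + 2 * Complex.I) / ((a : ℂ) - 2 * Complex.I) with hu
  set v := 1 + Complex.I*(a:ℂ)/2 with hv
  have huv : u * v = (a:ℂ)*Complex.I := by
    rw [hu, hv]
    field_simp
    linear_combination (4*(a:ℂ)) * Complex.I_sq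
  have hv0 : v ≠ 0 := by
    intro h
    have := congrArg Complex.re h
    simp [hv] at this
  have hu0 : u ≠ 0 := by
    intro h
    rw [h, zero_mul] at huv
    exact (mul_ne_zero ha0 Complex.I_ne_zero) huv.symm
  have hvre : (0:ℝ) ≤ v.re := by simp [hv]
  have hvim : (0:ℝ) ≤ v.im := by
    simp [hv]
    positivity
  have hure : (0:ℝ) ≤ u.re := by
    rw [hu]
    simp only [Complex.add_re, Complex.one_re, Complex.div_re]
    simp [Complex.normSq_apply]
    rw [← add_div]
    rw [show (1:ℝ) + (a * a + -(2*2)) / (a * a + 2*2) = 2*a*a/(a*a+2*2) by field_simp; ring]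
    positivity
  have huim : (0:ℝ) ≤ u.im := by
    rw [hu]
    simp only [Complex.add_im, Complex.one_im, Complex.div_im]
    simp [Complex.normSq_apply]
    rw [div_le_div_iff_of_pos_right]
    · linarith
    · positivity
  have hargu : Complex.arg u ≤ π/2 := Complex.arg_le_pi_div_two_iff.mpr (Or.inl hure)
  have hargv : Complex.arg v ≤ π/2 := Complex.arg_le_pi_div_two_iff.mpr (Or.inl hvre)
  have hargu0 : 0 ≤ Complex.arg u := Complex.arg_nonneg_iff.mpr huim
  have hargv0 : 0 ≤ Complex.arg v := Complex.arg_nonneg_iff.mpr hvim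
  have hlog : Complex.log ((a:ℂ)*Complex.I) = Complex.log u + Complex.log v := by
    rw [← huv]
    refine Complex.log_mul hu0 hv0 (Set.mem_Ioc.mpr ⟨by linarith [Real.pi_pos], by linarith [Real.pi_pos]⟩)
  have hlogaI : Complex.log ((a:ℂ)*Complex.I) = (Real.log a : ℂ) + (π/2 : ℂ)*Complex.I := by
    rw [Complex.log_ofReal_mul ha Complex.I_ne_zero, Complex.log_I]
  have hlognaI : Complex.log (-(a:ℂ)*Complex.I) = (Real.log a : ℂ) - (π/2 : ℂ)*Complex.I := by
    rw [show -(a:ℂ)*Complex.I = (a:ℂ)*(-Complex.I) by ring,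
      Complex.log_ofReal_mul ha (neg_ne_zero.mpr Complex.I_ne_zero), Complex.log_neg_I]
    ring
  have hu_val : Complex.log u = (Real.log a : ℂ) + (π/2 : ℂ)*Complex.I - Complex.log v := by
    rw [← hlogaI, hlog]
    ring
  rw [hlognaI, hu_val]
  ring

theorem G_boundary_limit (a : ℝ) (ha : 0 < a) :
    Filter.Tendsto
      (fun δ : ℝ => G (((1 - δ : ℝ) : ℂ)
        * Complex.exp ((↑(π - (a * δ) ^ ((1 : ℝ) / 3)) : ℂ) * Complex.I)))
      (nhdsWithin 0 (Set.Ioi 0))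
      (nhds ((π : ℂ) * Complex.I
        + Complex.log (1 + ((a : ℂ) + 2 * Complex.I) / ((a : ℂ) - 2 * Complex.I)))) := by
  show Tendsto (fun δ : ℝ => G (zfun a δ)) _ _
  have ha0 : ((a:ℝ):ℂ) ≠ 0 := by exact_mod_cast ne_of_gt ha
  have hC := CLim a ha
  have hB := BLim a ha
  -- limit of A = a * C^3
  have hA : Tendsto (fun δ : ℝ => (a:ℂ) * ((1 + zfun a δ) / (alp a δ : ℂ))^3)
      (nhdsWithin 0 (Set.Ioi 0)) (nhds (-(a:ℂ)*Complex.I)) := by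
    have h := (hC.pow 3).const_mul (a:ℂ)
    rw [show (a:ℂ) * Complex.I^3 = -(a:ℂ)*Complex.I by
      rw [pow_succ, Complex.I_sq]; ring] at h
    exact h
  -- arg of C tends to π/2
  have hargC : Tendsto (fun δ : ℝ => Complex.arg ((1 + zfun a δ) / (alp a δ : ℂ)))
      (nhdsWithin 0 (Set.Ioi 0)) (nhds (π/2)) := by
    have hcont : ContinuousAt Complex.arg Complex.I :=
      Complex.continuousAt_arg (by simp [Complex.mem_slitPlane_iff])
    have h := hcont.tendsto.comp hC
    rwa [Complex.arg_I] at h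
  -- eventualities
  have hev1 : ∀ᶠ δ : ℝ in nhdsWithin 0 (Set.Ioi 0),
      Complex.arg ((1 + zfun a δ) / (alp a δ : ℂ)) ∈ Set.Ioo (π/3) (2*π/3) :=
    hargC (Ioo_mem_nhds (by linarith [Real.pi_pos]) (by linarith [Real.pi_pos]))
  have hev2 : ∀ᶠ δ : ℝ in nhdsWithin 0 (Set.Ioi 0),
      (1 + zfun a δ) / (alp a δ : ℂ) ≠ 0 :=
    hC.eventually_ne Complex.I_ne_zero
  have hev3 : ∀ᶠ δ : ℝ in nhdsWithin 0 (Set.Ioi 0),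
      (1 + zfun a δ * (3 + zfun a δ) / (3 + (starRingEnd ℂ) (zfun a δ))) / (δ:ℂ) ≠ 0 := by
    refine hB.eventually_ne ?_
    intro h
    have := congrArg Complex.re h
    simp at this
  have hev4 : ∀ᶠ δ : ℝ in nhdsWithin 0 (Set.Ioi 0), δ ∈ Set.Ioo (0:ℝ) 1 :=
    Ioo_mem_nhdsGT_of_mem (Set.mem_Ico.mpr ⟨le_refl (0:ℝ), zero_lt_one⟩)
  -- limit of the model function
  have hlogA : Tendsto (fun δ : ℝ => Complex.log ((a:ℂ) * ((1 + zfun a δ) / (alp a δ : ℂ))^3))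
      (nhdsWithin 0 (Set.Ioi 0)) (nhds (Complex.log (-(a:ℂ)*Complex.I))) := by
    have hsl : -(a:ℂ)*Complex.I ∈ Complex.slitPlane := by
      rw [Complex.mem_slitPlane_iff]
      right
      simp [ha.ne']
    exact (continuousAt_clog hsl).tendsto.comp hA
  have hlogB : Tendsto (fun δ : ℝ => Complex.log
      ((1 + zfun a δ * (3 + zfun a δ) / (3 + (starRingEnd ℂ) (zfun a δ))) / (δ:ℂ)))
      (nhdsWithin 0 (Set.Ioi 0)) (nhds (Complex.log (1 + Complex.I*(a:ℂ)/2))) := by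
    have hsl : (1:ℂ) + Complex.I*(a:ℂ)/2 ∈ Complex.slitPlane := by
      rw [Complex.mem_slitPlane_iff]
      left
      simp
    exact (continuousAt_clog hsl).tendsto.comp hB
  have htarget := ((tendsto_const_nhds (x := 2*(π:ℂ)*Complex.I)
      (f := nhdsWithin (0:ℝ) (Set.Ioi 0))).add hlogA).sub hlogB
  rw [valueEq a ha] at htarget
  refine htarget.congr' ?_
  filter_upwards [hev1, hev2, hev3, hev4] with δ harg hCne hBne hδ
  obtain ⟨hδ0, hδ1⟩ := hδ
  have hα : 0 < alp a δ := Real.rpow_pos_of_pos (mul_pos ha hδ0) _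
  have hα0 : ((alp a δ : ℝ):ℂ) ≠ 0 := by exact_mod_cast ne_of_gt hα
  have hd0 : ((δ:ℝ):ℂ) ≠ 0 := by exact_mod_cast ne_of_gt hδ0
  have hcube : ((alp a δ : ℝ):ℂ)^3 = (a:ℂ) * (δ:ℂ) :=
    mod_cast congrArg (fun x : ℝ => (x:ℂ)) (alp_cube a δ ha hδ0)
  set w := 1 + zfun a δ with hw
  set C := w / ((alp a δ : ℝ):ℂ) with hCdef
  have hwC : w = ((alp a δ : ℝ):ℂ) * C := by
    rw [hCdef]
    field_simp
  have hwne : w ≠ 0 := by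
    rw [hwC]
    exact mul_ne_zero hα0 hCne
  have hargw : Complex.arg w = Complex.arg C := by
    rw [hwC]
    exact Complex.arg_real_mul C hα
  have hAne : (a:ℂ) * C^3 ≠ 0 := mul_ne_zero ha0 (pow_ne_zero 3 hCne)
  -- w^3 = δ * (a * C^3)
  have hAe : w^3 = (δ:ℂ) * ((a:ℂ) * C^3) := by
    rw [hCdef, div_pow]
    rw [hcube]
    field_simp
  -- log (w^3) = 3 log w - 2 π i
  have hexp : Complex.exp (3*Complex.log w - 2*(π:ℂ)*Complex.I) = w^3 := by
    rw [Complex.exp_sub, Complex.exp_two_pi_mul_I,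
      show (3:ℂ)*Complex.log w = Complex.log w + Complex.log w + Complex.log w by ring,
      Complex.exp_add, Complex.exp_add, Complex.exp_log hwne]
    rw [div_one]
    ring
  have him : (3*Complex.log w - 2*(π:ℂ)*Complex.I).im = 3*Complex.arg w - 2*π := by
    simp [Complex.log_im]
  have hlogw3 : Complex.log (w^3) = 3*Complex.log w - 2*(π:ℂ)*Complex.I := by
    rw [← hexp, Complex.log_exp]
    · rw [him, hargw]
      have := harg.1
      linarith
    · rw [him, hargw]
      have := harg.2
      have := Real.pi_pos
      linarith
  -- assemble G
  have h3l : 3*Complex.log w = (Real.log δ : ℂ) + Complex.log ((a:ℂ) * C^3) + 2*(π:ℂ)*Complex.I := by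
    have h1 : Complex.log (w^3) = (Real.log δ : ℂ) + Complex.log ((a:ℂ) * C^3) := by
      rw [hAe, Complex.log_ofReal_mul hδ0 hAne]
    rw [← h1, hlogw3]
    ring
  have hBne' : (1 + zfun a δ * (3 + zfun a δ) / (3 + (starRingEnd ℂ) (zfun a δ))) ≠ 0 := by
    intro h
    apply hBne
    rw [h, zero_div]
  have hlogsec : Complex.log (1 + zfun a δ * (3 + zfun a δ) / (3 + (starRingEnd ℂ) (zfun a δ)))
      = (Real.log δ : ℂ) + Complex.log
        ((1 + zfun a δ * (3 + zfun a δ) / (3 + (starRingEnd ℂ) (zfun a δ))) / (δ:ℂ)) := by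
    rw [← Complex.log_ofReal_mul hδ0 hBne, mul_div_cancel₀ _ hd0]
  simp only [G]
  rw [h3l, hlogsec]
  ring
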